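/- arXiv:2212.01677 — 3 statements merged into one kernel-verified Lean document; each statement's English description precedes it below -/
import Mathlib

section
/- BD2 is a logic of formal inconsistency and undeterminedness: in the BD2 matrix with designated set D={1,b}, (a) there exists x with x ∈ D and ©x ∈ D; (b) there exists x with ¬x ∈ D and ©x ∈ D; (c) for all x, not all three of x, ¬x, ©x lie in D; (d) there exists x with x ∨ ★x ∉ D; (e) there exists x with ¬x ∨ ★x ∉ D; (f) for all x, x ∨ ¬x ∨ ★x ∈ D, where ★x := ¬©©x. -/
/-- The BD2 algebra carrier: the four-element diamond lattice {1,b,n,0}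
(0 ≤ b ≤ 1, 0 ≤ n ≤ 1, b,n incomparable) realized as pairs `Bool × Boolᵒᵈ`,
identifying 1=(1,0), b=(1,1), n=(0,0), 0=(0,1). Lattice meet/join are the
diamond's ∧/∨. -/
abbrev FourVal : Type := Bool × Boolᵒᵈ

namespace FourVal

def vOne : FourVal := (true, OrderDual.toDual false)
def vB : FourVal := (true, OrderDual.toDual true)
def vN : FourVal := (false, OrderDual.toDual false)
def vZero : FourVal := (false, OrderDual.toDual true)

/-- designated values D = {1, b} -/
def des (x : FourVal) : Prop := x = vOne ∨ x = vB

/-- De Morgan negation: ¬1=0, ¬b=b, ¬n=n, ¬0=1 -/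
def neg (x : FourVal) : FourVal :=
  (OrderDual.ofDual x.2, OrderDual.toDual x.1)

/-- consistency operator: ©1=1, ©b=0, ©n=b, ©0=1 -/
def cons (x : FourVal) : FourVal :=
  (!(x.1 && OrderDual.ofDual x.2), OrderDual.toDual (x.1 == OrderDual.ofDual x.2))

/-- BD2 implication: 1→y=y, b→y=y, n→1=1, n→b=b, n→n=1, n→0=b, 0→y=1 -/
def impl (x y : FourVal) : FourVal :=
  ((!x.1 || y.1),
   OrderDual.toDual ((!(OrderDual.ofDual x.2) || x.1) && OrderDual.ofDual y.2))

/-- strong negation ∼x := ©x ∧ ¬(x ∧ ©x) -/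
def snot (x : FourVal) : FourVal := cons x ⊓ neg (x ⊓ cons x)

/-- ✩x := ©©x -/
def star (x : FourVal) : FourVal := cons (cons x)

/-- ★x := ¬©©x -/
def wstar (x : FourVal) : FourVal := neg (cons (cons x))

end FourVal
open FourVal in
instance : DecidablePred FourVal.des := fun x => by unfold FourVal.des; infer_instance

open FourVal in
/-- BD2 is a Logic of Formal Inconsistency and Undeterminedness. -/
theorem bd2_lfiu :
    (∃ x : FourVal, des x ∧ des (cons x)) ∧
    (∃ x : FourVal, des (neg x) ∧ des (cons x)) ∧
    (∀ x : FourVal, ¬ (des x ∧ des (neg x) ∧ des (cons x))) ∧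
    (∃ x : FourVal, ¬ des (x ⊔ wstar x)) ∧
    (∃ x : FourVal, ¬ des (neg x ⊔ wstar x)) ∧
    (∀ x : FourVal, des (x ⊔ neg x ⊔ wstar x)) := by
  refine ⟨⟨vOne, Or.inl rfl, Or.inl rfl⟩, ⟨vZero, ?_, ?_⟩, ?_, ⟨vZero, ?_⟩, ⟨vOne, ?_⟩, ?_⟩ <;> decide
end

section
/- For any Boolean algebra A and the twist structure over A (with operations ¬̃(a,b)=(b,a), (a,b)∧̃(c,d)=(a⊓c,b⊔d), (a,b)→̃(c,d)=(a⇒c,(b⇒a)⊓d), ©̃(a,b)=(∼(a⊓b), a⇔b)), the following hold for all pairs x=(a,b): the first component of ©̃x ∧̃ x ∧̃ ¬̃x is 0 (axiom ©-1 holds), the first component of ©̃x ∨̃ (x ∧̃ ¬̃x) is 1 (axiom ©-2 holds), and ¬̃©̃x has the same first component as x →̃ ¬̃x paired with ¬̃x →̃ x (i.e., the first component of ¬̃©̃x equals a⇔b, validating axiom ©-3). -/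
section Twist
variable {A : Type*} [BooleanAlgebra A]

/-- twist negation ¬̃(a,b) = (b,a) -/
def tneg (x : A × A) : A × A := (x.2, x.1)
/-- twist conjunction (a,b) ∧̃ (c,d) = (a⊓c, b⊔d) -/
def tand (x y : A × A) : A × A := (x.1 ⊓ y.1, x.2 ⊔ y.2)
/-- twist disjunction (a,b) ∨̃ (c,d) = (a⊔c, b⊓d) -/
def tor (x y : A × A) : A × A := (x.1 ⊔ y.1, x.2 ⊓ y.2)
/-- twist implication (a,b) →̃ (c,d) = (a⇒c, (b⇒a)⊓d) -/
def timp (x y : A × A) : A × A := (x.1 ⇨ y.1, (x.2 ⇨ x.1) ⊓ y.2)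
/-- twist consistency ©̃(a,b) = (∼(a⊓b), a⇔b) -/
def tcons (x : A × A) : A × A := ((x.1 ⊓ x.2)ᶜ, (x.1 ⇨ x.2) ⊓ (x.2 ⇨ x.1))

end Twist

/-- Over any Boolean algebra the twist structure validates the ©-axioms:
(©-1) the first component of ©̃x ∧̃ x ∧̃ ¬̃x is 0 (bottom);
(©-2) the first component of ©̃x ∨̃ (x ∧̃ ¬̃x) is 1 (top);
(©-3) the first component of ¬̃©̃x equals a⇔b. -/
theorem twist_cons_axioms {A : Type*} [BooleanAlgebra A] :
    ∀ x : A × A,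
      (tand (tcons x) (tand x (tneg x))).1 = ⊥ ∧
      (tor (tcons x) (tand x (tneg x))).1 = ⊤ ∧
      (tneg (tcons x)).1 = (x.1 ⇨ x.2) ⊓ (x.2 ⇨ x.1) := by
  intro x
  obtain ⟨a, b⟩ := x
  refine ⟨?_, ?_, rfl⟩ <;> simp [tand, tor, tcons, tneg]
  · rw [← compl_inf, inf_comm, inf_compl_eq_bot]
  · rw [← compl_inf, compl_sup_eq_top]
end

section
/- There is a counterexample showing ∃xφ and ∼∀x∼φ are not strongly equivalent in QBD2: over a two-element domain {a,b} with a unary predicate P interpreted by P(a)=0 and P(b)=b, the value of ∃xP(x) (computed as the supremum of the values) is b, while the value of ∼∀x∼P(x) (where ∼ is the strong negation of BD2 with ∼0=1, ∼b=0, ∼n=b, ∼1=0, and ∀ is interpreted as infimum) is 1. -/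
open FourVal in
/-- Counterexample: ∃xP(x) and ∼∀x∼P(x) are not strongly equivalent in QBD2.
Over the two-element domain Bool with P(false)=0 and P(true)=b, the value of
∃xP(x) (a supremum) is b while the value of ∼∀x∼P(x) is 1. -/
theorem exists_not_strongly_eq_snot_forall_snot :
    ∃ P : Bool → FourVal, P false = vZero ∧ P true = vB ∧
      (⨆ d : Bool, P d) = vB ∧
      snot (⨅ d : Bool, snot (P d)) = vOne := by
  refine ⟨fun d => if d then vB else vZero, rfl, rfl, ?_, ?_⟩
  · rw [iSup_bool_eq]; decide
  · rw [iInf_bool_eq]; decide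
end
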